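/- arXiv:1308.0706 — 4 statements merged into one kernel-verified Lean document; each statement's English description precedes it below -/
import Mathlib

section
/- Let n : ℂ, η : ℂ with η real (Im η = 0), and I₃, I₄ > 0 real. If (n² - (conj n)²) I₃ = (conj n · η - n · conj η) I₄ and n is not real (Im n ≠ 0), then Re(n) = -Re(η) · I₄ / (2 I₃), which is negative when Re(η) > 0. -/
open Complex

/-! For real `η` both sides of the relation are purely imaginary: `n² - n̄² = 4 i Re n Im n` and
`n̄ η - n η̄ = -2 i η Im n`. Cancelling `Im n ≠ 0` leaves `2 I₃ Re n = -η I₄`. -/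

theorem Complex.sq_sub_conj_sq (z : ℂ) :
    z ^ 2 - starRingEnd ℂ z ^ 2 = ((4 * z.re * z.im : ℝ) : ℂ) * I := by
  apply Complex.ext <;> simp [pow_two]
  ring

theorem Complex.conj_mul_sub_mul_conj_of_im_eq_zero {η : ℂ} (hη : η.im = 0) (z : ℂ) :
    starRingEnd ℂ z * η - z * starRingEnd ℂ η = ((-2 * η.re * z.im : ℝ) : ℂ) * I := by
  apply Complex.ext <;> simp [hη]
  ring

theorem re_eq_of_conj_eigenrelation {n η : ℂ} {I₃ I₄ : ℝ} (hI₃ : I₃ ≠ 0) (hη : η.im = 0)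
    (heq : (n ^ 2 - (starRingEnd ℂ n) ^ 2) * (I₃ : ℂ)
            = ((starRingEnd ℂ n) * η - n * (starRingEnd ℂ η)) * (I₄ : ℂ))
    (hnim : n.im ≠ 0) :
    n.re = -η.re * I₄ / (2 * I₃) := by
  rw [Complex.sq_sub_conj_sq, Complex.conj_mul_sub_mul_conj_of_im_eq_zero hη] at heq
  have him : 4 * n.re * n.im * I₃ = -2 * η.re * n.im * I₄ := by
    simpa using congrArg Complex.im heq
  have hfactor : n.im * (2 * I₃ * n.re + η.re * I₄) = 0 := by linear_combination him / 2
  have hlin : 2 * I₃ * n.re + η.re * I₄ = 0 := (mul_eq_zero.mp hfactor).resolve_left hnim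
  field_simp
  linarith

/-- Newtonian case: if `η` is real, `I₃, I₄ > 0`, the eigenvalue relation
`(n² - n̄²) I₃ = (n̄ η - n η̄) I₄` holds and `n` is not real, then
`Re n = -Re(η) I₄ / (2 I₃)`; this is negative when `Re η > 0`. -/
theorem newtonian_oscillatory_modes_stable
    (n η : ℂ) (I₃ I₄ : ℝ) (hI₃ : 0 < I₃) (hI₄ : 0 < I₄)
    (hη : η.im = 0)
    (heq : (n ^ 2 - (starRingEnd ℂ n) ^ 2) * (I₃ : ℂ)
            = ((starRingEnd ℂ n) * η - n * (starRingEnd ℂ η)) * (I₄ : ℂ))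
    (hnim : n.im ≠ 0) :
    n.re = -η.re * I₄ / (2 * I₃) ∧ (0 < η.re → n.re < 0) := by
  have hre := re_eq_of_conj_eigenrelation hI₃.ne' hη heq hnim
  refine ⟨hre, fun hηpos => ?_⟩
  rw [hre]
  exact div_neg_of_neg_of_pos (by nlinarith) (by positivity)
end

section
/- Let n : ℂ, n ≠ 0, and I₅, I₆, I₇, g, k, γ : ℝ with I₅ > 0, I₇ > 0, k ≠ 0, γ > 0. If n is not real and (conj n - n)(I₅ + g I₆ / |n|² - k² γ I₇ / |n|²) = 0, then |n|² = (k² γ I₇ - g I₆) / I₅, and consequently k² γ I₇ - g I₆ > 0. -/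
open Complex

theorem Complex.conj_sub_self_ne_zero {z : ℂ} (hz : z.im ≠ 0) : starRingEnd ℂ z - z ≠ 0 :=
  sub_ne_zero.2 (mt conj_eq_iff_im.1 hz)

theorem mul_eq_sub_of_add_div_sub_div_eq_zero {K : Type*} [Field K] {a b c d : K} (hd : d ≠ 0)
    (h : a + b / d - c / d = 0) : d * a = c - b := by
  field_simp at h
  linear_combination h

theorem modulus_of_nonreal_eigenvalue_general
    (n : ℂ) (I₅ I₆ I₇ g k γ : ℝ)
    (hI₅ : 0 < I₅)
    (hnim : n.im ≠ 0)
    (heq : ((starRingEnd ℂ) n - n) *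
        ((I₅ : ℂ) + (g : ℂ) * I₆ / (Complex.normSq n : ℂ)
          - (k : ℂ) ^ 2 * γ * I₇ / (Complex.normSq n : ℂ)) = 0) :
    (Complex.normSq n : ℝ) = (k ^ 2 * γ * I₇ - g * I₆) / I₅ ∧
      0 < k ^ 2 * γ * I₇ - g * I₆ := by
  have hn : n ≠ 0 := fun h => hnim (by simp [h])
  have hN : 0 < Complex.normSq n := Complex.normSq_pos.2 hn
  have hnormSq_mul : Complex.normSq n * I₅ = k ^ 2 * γ * I₇ - g * I₆ := by
    have hfactor := (mul_eq_zero.1 heq).resolve_left (Complex.conj_sub_self_ne_zero hnim)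
    exact_mod_cast mul_eq_sub_of_add_div_sub_div_eq_zero (by exact_mod_cast hN.ne') hfactor
  exact ⟨eq_div_of_mul_eq hI₅.ne' hnormSq_mul, hnormSq_mul ▸ mul_pos hN hI₅⟩

/-- Non-real eigenvalue with surface tension: the second factor must vanish,
determining `|n|² = (k²γ I₇ - g I₆)/I₅`, which is therefore positive. -/
theorem modulus_of_nonreal_eigenvalue
    (n : ℂ) (I₅ I₆ I₇ g k γ : ℝ)
    (hn : n ≠ 0) (hI₅ : 0 < I₅) (hI₇ : 0 < I₇) (hk : k ≠ 0) (hγ : 0 < γ)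
    (hnim : n.im ≠ 0)
    (heq : ((starRingEnd ℂ) n - n) *
        ((I₅ : ℂ) + (g : ℂ) * I₆ / (Complex.normSq n : ℂ)
          - (k : ℂ) ^ 2 * γ * I₇ / (Complex.normSq n : ℂ)) = 0) :
    (Complex.normSq n : ℝ) = (k ^ 2 * γ * I₇ - g * I₆) / I₅ ∧
      0 < k ^ 2 * γ * I₇ - g * I₆ :=
  modulus_of_nonreal_eigenvalue_general n I₅ I₆ I₇ g k γ hI₅ hnim heq
end

section
/- Descartes' rule of signs, weak form: a real polynomial whose nonzero coefficients, listed by descending exponent, have exactly one sign change has at least one positive real root. -/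
/-!
Along a list of nonzero reals, the sign changes between consecutive entries compose to the
sign of (first entry) * (last entry), so an odd number of changes means the extreme entries
have opposite signs. For the nonzero coefficients of `p` these are the leading and trailing
coefficients. Writing `p = X ^ m * q`, the value `q 0` is the trailing coefficient, while
`q x` has the sign of the leading coefficient for large `x`, so `q` (and thus `p`) vanishes at
some `x > 0` by the intermediate value theorem.
-/

open Polynomial

/-- Number of sign changes between consecutive entries of a list of reals. -/
noncomputable def signChanges (l : List ℝ) : ℕ :=
  ((l.zip l.tail).filter (fun q => q.1 * q.2 < 0)).length

open Filter

lemma signChanges_cons_cons (a b : ℝ) (t : List ℝ) :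
    signChanges (a :: b :: t) = (if a * b < 0 then 1 else 0) + signChanges (b :: t) := by
  by_cases h : a * b < 0 <;> simp [signChanges, h, Nat.add_comm]

lemma mul_neg_iff_mul_neg_iff_not_mul_neg {R : Type*} [Ring R] [LinearOrder R]
    [IsStrictOrderedRing R] {a b c : R} (ha : a ≠ 0) (hb : b ≠ 0) (hc : c ≠ 0) :
    a * c < 0 ↔ (a * b < 0 ↔ ¬ b * c < 0) := by
  rcases ha.lt_or_gt with ha | ha <;> rcases hb.lt_or_gt with hb | hb <;>
    rcases hc.lt_or_gt with hc | hc <;>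
    simp [mul_neg_iff, ha, hb, hc, not_lt_of_gt ha, not_lt_of_gt hb, not_lt_of_gt hc]

theorem odd_signChanges_iff {l : List ℝ} (hl : ∀ x ∈ l, x ≠ 0) {a b : ℝ}
    (ha : l.head? = some a) (hb : l.getLast? = some b) :
    Odd (signChanges l) ↔ a * b < 0 := by
  induction l generalizing a with
  | nil => simp at ha
  | cons x t ih =>
    obtain rfl : x = a := by simpa using ha
    cases t with
    | nil =>
      obtain rfl : x = b := by simpa using hb
      simpa [signChanges] using (mul_self_nonneg x).not_gt
    | cons y t =>
      rw [List.getLast?_cons_cons] at hb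
      have hy : y ≠ 0 := hl y (by simp)
      have hb0 : b ≠ 0 := hl b (.tail x (List.mem_of_getLast? hb))
      rw [signChanges_cons_cons, mul_neg_iff_mul_neg_iff_not_mul_neg (hl x (by simp)) hy hb0,
        ← ih (fun z hz => hl z (.tail x hz)) rfl hb]
      split_ifs with hxy <;> simp [hxy, Nat.odd_add_one, add_comm]

section Coefficients

variable {R : Type*} [Semiring R] [DecidableEq R] {p : R[X]}

theorem head?_filter_coeff_reverse_range (hp : p ≠ 0) :
    (((List.range (p.natDegree + 1)).reverse.map p.coeff).filter (· ≠ 0)).head? =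
      some p.leadingCoeff := by
  simp [List.range_succ, hp]

theorem head?_filter_coeff_range (hp : p ≠ 0) :
    (((List.range (p.natDegree + 1)).map p.coeff).filter (· ≠ 0)).head? =
      some p.trailingCoeff := by
  obtain ⟨k, hk⟩ : ∃ k, p.natDegree + 1 = p.natTrailingDegree + (k + 1) :=
    ⟨p.natDegree - p.natTrailingDegree, by have := p.natTrailingDegree_le_natDegree; omega⟩
  have hzero : ((List.range p.natTrailingDegree).map p.coeff).filter (· ≠ 0) = [] := by
    simp +contextual [List.filter_eq_nil_iff, coeff_eq_zero_of_lt_natTrailingDegree]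
  rw [hk, List.range_add, List.map_append, List.filter_append, hzero, List.nil_append,
    List.range_succ_eq_map]
  simp [hp, trailingCoeff]

theorem getLast?_filter_coeff_reverse_range (hp : p ≠ 0) :
    (((List.range (p.natDegree + 1)).reverse.map p.coeff).filter (· ≠ 0)).getLast? =
      some p.trailingCoeff := by
  rw [List.map_reverse, List.filter_reverse, List.getLast?_reverse, head?_filter_coeff_range hp]

end Coefficients

theorem exists_pos_isRoot_of_leadingCoeff_mul_eval_zero_neg {q : ℝ[X]}
    (h : q.leadingCoeff * q.eval 0 < 0) : ∃ x, 0 < x ∧ q.IsRoot x := by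
  wlog hlc : 0 < q.leadingCoeff generalizing q
  · have hlc' : 0 < (-q).leadingCoeff := by
      rw [leadingCoeff_neg, neg_pos]
      exact lt_of_le_of_ne (not_lt.mp hlc) (left_ne_zero_of_mul h.ne)
    obtain ⟨x, hx, hroot⟩ := this (q := -q) (by simpa using h) hlc'
    exact ⟨x, hx, by simpa using hroot⟩
  have h0 : q.eval 0 < 0 := neg_of_mul_neg_right h hlc.le
  have hdeg : 0 < q.degree := by
    by_contra! hdeg
    rw [eq_C_of_degree_le_zero hdeg] at h
    simp only [leadingCoeff_C, eval_C] at h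
    exact (mul_self_nonneg _).not_gt h
  obtain ⟨b, hqb, hb⟩ :=
    (((tendsto_atTop_of_leadingCoeff_nonneg q hdeg hlc.le).eventually_gt_atTop 0).and
      (eventually_gt_atTop 0)).exists
  obtain ⟨x, hx, hqx⟩ := intermediate_value_Ioo hb.le q.continuousOn ⟨h0, hqb⟩
  exact ⟨x, hx.1, hqx⟩

theorem exists_pos_isRoot_of_leadingCoeff_mul_trailingCoeff_neg {p : ℝ[X]}
    (h : p.leadingCoeff * p.trailingCoeff < 0) : ∃ x, 0 < x ∧ p.IsRoot x := by
  set m := p.natTrailingDegree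
  obtain ⟨q, hq⟩ : X ^ m ∣ p :=
    X_pow_dvd_iff.mpr fun d hd => coeff_eq_zero_of_lt_natTrailingDegree hd
  have htrail : p.trailingCoeff = q.eval 0 := by
    rw [trailingCoeff, ← coeff_zero_eq_eval_zero, ← coeff_X_pow_mul q m 0, zero_add, ← hq]
  rw [htrail, hq, leadingCoeff_mul, leadingCoeff_X_pow, one_mul] at h
  obtain ⟨x, hx, hroot⟩ := exists_pos_isRoot_of_leadingCoeff_mul_eval_zero_neg h
  exact ⟨x, hx, hq ▸ root_mul_left_of_isRoot _ hroot⟩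

/-- Descartes' rule of signs, weak form: a real polynomial whose nonzero
coefficients, listed by descending exponent, have exactly one sign change
has at least one positive real root. -/
theorem descartes_one_sign_change_pos_root
    (p : Polynomial ℝ) (hp : p ≠ 0)
    (hsign : signChanges
        ((((List.range (p.natDegree + 1)).reverse.map p.coeff).filter
          (fun c => c ≠ 0))) = 1) :
    ∃ x : ℝ, 0 < x ∧ p.eval x = 0 := by
  have hnonzero : ∀ c ∈ ((List.range (p.natDegree + 1)).reverse.map p.coeff).filter (· ≠ 0),
      c ≠ 0 := fun c hc => by simpa using List.of_mem_filter hc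
  have hodd : Odd (signChanges
      (((List.range (p.natDegree + 1)).reverse.map p.coeff).filter (· ≠ 0))) := by
    rw [hsign]
    exact odd_one
  exact exists_pos_isRoot_of_leadingCoeff_mul_trailingCoeff_neg <|
    (odd_signChanges_iff hnonzero (head?_filter_coeff_reverse_range hp)
      (getLast?_filter_coeff_reverse_range hp)).mp hodd
end

section
/- Let ρ₁, ρ₂, g₁, g₂, γ, k : ℝ with ρ₁, ρ₂ > 0, k > 0, γ ≥ 0, U₁ = U₂. If ρ₁ g₁ - ρ₂ g₂ + k² γ < 0, then there exists n ∈ ℂ satisfying the dispersion relation i n/k = U₁ ± √D (with D as below) such that Re(n) > 0. -/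
open Complex

/-- Rayleigh–Taylor instability: with equal base velocities and
`ρ₁ g₁ - ρ₂ g₂ + k² γ < 0`, there is a root of the dispersion relation with
positive real part. -/
theorem negative_discriminant_unstable_mode
    (ρ₁ ρ₂ U₁ U₂ g₁ g₂ γ k : ℝ)
    (hρ₁ : 0 < ρ₁) (hρ₂ : 0 < ρ₂) (hk : 0 < k) (hγ : 0 ≤ γ)
    (hU : U₁ = U₂)
    (D : ℝ)
    (hD : D = (ρ₁ * g₁ - ρ₂ * g₂) / (k * (ρ₁ + ρ₂)) + k * γ / (ρ₁ + ρ₂))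
    (hneg : ρ₁ * g₁ - ρ₂ * g₂ + k ^ 2 * γ < 0) :
    ∃ n : ℂ,
      (Complex.I * n / (k : ℂ)
          = (U₁ : ℂ) + Complex.I * (Real.sqrt (-D) : ℝ) ∨
       Complex.I * n / (k : ℂ)
          = (U₁ : ℂ) - Complex.I * (Real.sqrt (-D) : ℝ)) ∧
      0 < n.re := by
  have hρ : 0 < ρ₁ + ρ₂ := by linarith
  have hkρ : 0 < k * (ρ₁ + ρ₂) := mul_pos hk hρ
  have hD' : D = (ρ₁ * g₁ - ρ₂ * g₂ + k ^ 2 * γ) / (k * (ρ₁ + ρ₂)) := by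
    rw [hD]; field_simp
  have hDneg : D < 0 := by
    rw [hD']; exact div_neg_of_neg_of_pos hneg hkρ
  set s := Real.sqrt (-D) with hs
  have hspos : 0 < s := Real.sqrt_pos.mpr (by linarith)
  have hk0 : (k : ℂ) ≠ 0 := by exact_mod_cast hk.ne'
  refine ⟨(k : ℂ) * ((s : ℂ) - Complex.I * (U₁ : ℂ)), Or.inl ?_, ?_⟩
  · field_simp
    ring_nf
    simp [Complex.I_sq]
  · simp [Complex.mul_re, Complex.I_re, Complex.I_im]
    nlinarith
end
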